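/- arXiv:1901.09434 — 7 statements merged into one kernel-verified Lean document; each statement's English description precedes it below -/
import Mathlib

section
/- For every graph G, the safe number and connected safe number satisfy s(G) ≤ cs(G) ≤ 2·s(G) − 1. -/
variable {V : Type*}

/-- Two vertex sets are adjacent if some edge joins them. -/
def SetsAdj (G : SimpleGraph V) (A B : Set V) : Prop :=
  ∃ a ∈ A, ∃ b ∈ B, G.Adj a b

/-- `u` and `v` are connected inside the induced subgraph `G[S]`. -/
def ReachIn (G : SimpleGraph V) (S : Set V) (u v : V) : Prop :=
  ∃ (hu : u ∈ S) (hv : v ∈ S), (G.induce S).Reachable ⟨u, hu⟩ ⟨v, hv⟩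

/-- `C` is (the vertex set of) a connected component of the induced subgraph `G[S]`. -/
def IsCompOf (G : SimpleGraph V) (S C : Set V) : Prop :=
  ∃ v ∈ S, C = {u | ReachIn G S u v}

/-- A safe set: nonempty, and no component of `G[S]` is adjacent to a larger
component of `G - S`. -/
def IsSafeSet (G : SimpleGraph V) (S : Set V) : Prop :=
  S.Nonempty ∧ ∀ C D : Set V, IsCompOf G S C → IsCompOf G Sᶜ D →
    SetsAdj G C D → D.ncard ≤ C.ncard

/-- A connected safe set. -/
def IsConnSafeSet (G : SimpleGraph V) (S : Set V) : Prop :=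
  IsSafeSet G S ∧ (G.induce S).Connected

/-- The safe number: minimum size of a safe set. -/
noncomputable def sNum (G : SimpleGraph V) : ℕ :=
  sInf {n | ∃ S : Set V, IsSafeSet G S ∧ S.ncard = n}

/-- The connected safe number: minimum size of a connected safe set. -/
noncomputable def csNum (G : SimpleGraph V) : ℕ :=
  sInf {n | ∃ S : Set V, IsConnSafeSet G S ∧ S.ncard = n}

/-!
Let `S` be a minimum safe set. Starting from one component of `G[S]`, grow a connected set `M`
that is a union of components of `G[S]` and of vertices outside `S`. As long as some component
`C` of `G[S]` is missing, connectivity of `G` yields one that is adjacent either to `M` or to a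
component `K` of `G - S` adjacent to `M`; safety gives `|K| ≤ |C|`, so attaching `K ∪ C` adds at
most `2|C|` vertices, `|C|` of them in `S`, and the invariant `|M| < 2|S ∩ M|` survives. The final
`T ⊇ S` is safe: each component of `G - T` lies in a component of `G - S`, which is adjacent to
`S` and hence has at most `|S| ≤ |T|` vertices.
-/

variable {G : SimpleGraph V} {A B K M S T W : Set V} {u v w x y : V}

namespace ReachIn

lemma refl (hu : u ∈ A) : ReachIn G A u u := ⟨hu, hu, .refl _⟩

lemma symm (h : ReachIn G A u v) : ReachIn G A v u :=
  let ⟨hu, hv, r⟩ := h; ⟨hv, hu, r.symm⟩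

lemma trans (h : ReachIn G A u v) (h' : ReachIn G A v w) : ReachIn G A u w :=
  let ⟨hu, _, r⟩ := h; let ⟨_, hw, r'⟩ := h'; ⟨hu, hw, r.trans r'⟩

lemma mono (hAB : A ⊆ B) (h : ReachIn G A u v) : ReachIn G B u v :=
  let ⟨hu, hv, r⟩ := h; ⟨hAB hu, hAB hv, r.map (G.induceHomOfLE hAB).toHom⟩

lemma of_adj (huv : G.Adj u v) (hu : u ∈ A) (hv : v ∈ A) : ReachIn G A u v :=
  ⟨hu, hv, SimpleGraph.Adj.reachable (G := G.induce A) huv⟩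

end ReachIn

/-- The component of `x` in `G[A]`; it is empty when `x ∉ A`. -/
def compOf (G : SimpleGraph V) (A : Set V) (x : V) : Set V := {u | ReachIn G A u x}

lemma mem_compOf_self (hx : x ∈ A) : x ∈ compOf G A x := .refl hx

lemma compOf_subset : compOf G A x ⊆ A := fun _ hu ↦ hu.1

lemma isCompOf_compOf (hx : x ∈ A) : IsCompOf G A (compOf G A x) := ⟨x, hx, rfl⟩

lemma subset_compOf (hK : (G.induce K).Preconnected) (hKA : K ⊆ A) (hx : x ∈ K) :
    K ⊆ compOf G A x := fun k hk ↦
  ⟨hKA hk, hKA hx, (hK ⟨k, hk⟩ ⟨x, hx⟩).map (G.induceHomOfLE hKA).toHom⟩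

lemma connected_compOf (hx : x ∈ A) : (G.induce (compOf G A x)).Connected := by
  refine G.induce_connected_of_patches x (mem_compOf_self hx) fun {v} hv ↦ ?_
  obtain ⟨_, _, ⟨q⟩⟩ := ReachIn.symm (G := G) hv
  let p := q.map (SimpleGraph.Embedding.induce A).toHom
  have hpA : {y | y ∈ p.support} ⊆ A := by
    intro y hy
    obtain ⟨⟨z, hz⟩, -, rfl⟩ := List.mem_map.mp (q.support_map _ ▸ hy)
    exact hz
  exact ⟨_, subset_compOf p.connected_induce_support.preconnected hpA p.start_mem_support,
    p.start_mem_support, p.end_mem_support, p.connected_induce_support.preconnected _ _⟩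

lemma exists_adj_of_mem_of_notMem (hG : G.Preconnected) (hu : u ∈ A) (hv : v ∉ A) :
    ∃ a ∈ A, ∃ b ∉ A, G.Adj a b := by
  obtain ⟨d, -, hd, hd'⟩ := (hG u v).some.exists_boundary_dart A hu hv
  exact ⟨_, hd, _, hd', d.adj⟩

/-- Either `M` or a component of `G[W]` adjacent to `M` has a neighbour outside `M ∪ W`. -/
lemma exists_bridge (hG : G.Preconnected) (hu : u ∈ M) (hv : v ∉ M ∪ W) :
    ∃ x ∉ M ∪ W, ∃ y, G.Adj y x ∧ (y ∈ M ∨ SetsAdj G M (compOf G W y)) := by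
  set U := M ∪ {y | SetsAdj G M (compOf G W y)}
  have hvU : v ∉ U := by
    rintro (h | ⟨_, _, _, hk, _⟩)
    exacts [hv (.inl h), hv (.inr hk.2.1)]
  obtain ⟨y, hyU, x, hxU, hyx⟩ := exists_adj_of_mem_of_notMem hG (.inl hu : u ∈ U) hvU
  refine ⟨x, ?_, y, hyx, hyU⟩
  rintro (hxM | hxW)
  · exact hxU (.inl hxM)
  · refine hxU (.inr ?_)
    rcases hyU with hyM | ⟨m, hm, k, hk, hmk⟩
    · exact ⟨y, hyM, x, mem_compOf_self hxW, hyx⟩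
    · exact ⟨m, hm, k, hk.trans (.of_adj hyx hk.2.1 hxW), hmk⟩

namespace IsSafeSet

lemma ncard_compOf_compl_le_of_adj (hS : IsSafeSet G S) (hx : x ∈ S) (hy : y ∉ S)
    (hxy : G.Adj x y) : (compOf G Sᶜ y).ncard ≤ (compOf G S x).ncard :=
  hS.2 _ _ (isCompOf_compOf hx) (isCompOf_compOf hy)
    ⟨x, mem_compOf_self hx, y, mem_compOf_self hy, hxy⟩

lemma ncard_compOf_compl_le [Finite V] (hG : G.Preconnected) (hS : IsSafeSet G S) (hv : v ∉ S) :
    (compOf G Sᶜ v).ncard ≤ S.ncard := by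
  obtain ⟨s, hs⟩ := hS.1
  obtain ⟨a, ha, b, hb, hab⟩ :=
    exists_adj_of_mem_of_notMem hG (mem_compOf_self hv) (fun h ↦ h.1 hs : s ∉ compOf G Sᶜ v)
  have hbS : b ∈ S := by_contra fun hbS ↦ hb ((ReachIn.of_adj hab.symm hbS ha.1).trans ha)
  calc (compOf G Sᶜ v).ncard ≤ (compOf G S b).ncard :=
        hS.2 _ _ (isCompOf_compOf hbS) (isCompOf_compOf hv)
          ⟨b, mem_compOf_self hbS, a, ha, hab.symm⟩
    _ ≤ S.ncard := Set.ncard_le_ncard compOf_subset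

end IsSafeSet

structure IsThinHull (G : SimpleGraph V) (S M : Set V) : Prop where
  connected : (G.induce M).Connected
  reachIn_mem : ∀ u ∈ M, ∀ v, ReachIn G S u v → v ∈ M
  ncard_lt : M.ncard < 2 * (S ∩ M).ncard

lemma isThinHull_compOf [Finite V] (hx : x ∈ S) : IsThinHull G S (compOf G S x) where
  connected := connected_compOf hx
  reachIn_mem _ hu _ huv := huv.symm.trans hu
  ncard_lt := by
    rw [Set.inter_eq_self_of_subset_right compOf_subset]
    have := (Set.ncard_pos (Set.toFinite _)).mpr ⟨x, mem_compOf_self (G := G) hx⟩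
    omega

namespace IsThinHull

lemma disjoint_compOf (hM : IsThinHull G S M) (hxM : x ∉ M) : Disjoint M (compOf G S x) :=
  Set.disjoint_left.mpr fun v hvM hv ↦ hxM (hM.reachIn_mem v hvM x hv)

lemma union_compOf [Finite V] (hM : IsThinHull G S M) (hx : x ∈ S) (hxM : x ∉ M)
    (hKS : K ⊆ Sᶜ) (hKC : K.ncard ≤ (compOf G S x).ncard)
    (hMK : (G.induce (M ∪ K)).Connected) (hv : v ∈ M ∪ K) (hvx : G.Adj v x) :
    IsThinHull G S (M ∪ K ∪ compOf G S x) where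
  connected := SimpleGraph.connected_induce_union hMK.preconnected
    (connected_compOf hx).preconnected hv (mem_compOf_self hx) hvx
  reachIn_mem := by
    rintro u ((hu | hu) | hu) w huw
    · exact .inl (.inl (hM.reachIn_mem u hu w huw))
    · exact absurd huw.1 (hKS hu)
    · exact .inr (huw.symm.trans hu)
  ncard_lt := by
    set C := compOf G S x
    have hle : (M ∪ K ∪ C).ncard ≤ M.ncard + K.ncard + C.ncard :=
      (Set.ncard_union_le _ _).trans (by gcongr; exact Set.ncard_union_le _ _)
    have hge : (S ∩ M).ncard + C.ncard ≤ (S ∩ (M ∪ K ∪ C)).ncard := by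
      rw [← Set.ncard_union_eq ((hM.disjoint_compOf hxM).mono_left Set.inter_subset_right)]
      refine Set.ncard_le_ncard (Set.union_subset ?_ (Set.subset_inter compOf_subset
        Set.subset_union_right))
      exact Set.inter_subset_inter_right _ (Set.subset_union_left.trans Set.subset_union_left)
    have := hM.ncard_lt
    omega

lemma exists_ncard_inter_lt [Finite V] (hG : G.Preconnected) (hS : IsSafeSet G S)
    (hM : IsThinHull G S M) (hSM : ¬S ⊆ M) :
    ∃ M', IsThinHull G S M' ∧ (S ∩ M).ncard < (S ∩ M').ncard := by
  obtain ⟨z, hzS, hzM⟩ := Set.not_subset.mp hSM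
  obtain ⟨⟨m, hm⟩⟩ := hM.connected.nonempty
  obtain ⟨x, hx, y, hyx, hy⟩ := exists_bridge (v := z) (W := Sᶜ) hG hm (by simp [hzS, hzM])
  have hxS : x ∈ S := by_contra fun h ↦ hx (.inr h)
  have hxM : x ∉ M := fun h ↦ hx (.inl h)
  suffices ∃ K ⊆ Sᶜ, K.ncard ≤ (compOf G S x).ncard ∧ (G.induce (M ∪ K)).Connected ∧
      y ∈ M ∪ K by
    obtain ⟨K, hKS, hKC, hMK, hyK⟩ := this
    refine ⟨_, hM.union_compOf hxS hxM hKS hKC hMK hyK hyx, Set.ncard_lt_ncard ?_⟩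
    refine (Set.ssubset_iff_of_subset (Set.inter_subset_inter_right _ ?_)).mpr
      ⟨x, ⟨hxS, .inr (mem_compOf_self hxS)⟩, fun h ↦ hxM h.2⟩
    exact Set.subset_union_left.trans Set.subset_union_left
  rcases hy with hyM | ⟨m', hm', k, hk, hm'k⟩
  · refine ⟨∅, Set.empty_subset _, by simp, ?_, .inl hyM⟩
    rw [Set.union_empty]
    exact hM.connected
  · have hyS : y ∈ Sᶜ := hk.2.1
    exact ⟨compOf G Sᶜ y, compOf_subset, hS.ncard_compOf_compl_le_of_adj hxS hyS hyx.symm,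
      SimpleGraph.connected_induce_union hM.connected.preconnected
        (connected_compOf hyS).preconnected hm' hk hm'k, .inr (mem_compOf_self hyS)⟩

lemma isConnSafeSet [Finite V] (hG : G.Preconnected) (hS : IsSafeSet G S)
    (hT : IsThinHull G S T) (hST : S ⊆ T) : IsConnSafeSet G T := by
  refine ⟨⟨hS.1.mono hST, ?_⟩, hT.connected⟩
  rintro _ _ ⟨v, hv, rfl⟩ ⟨d, hd, rfl⟩ -
  have hCT : compOf G T v = T :=
    compOf_subset.antisymm (subset_compOf hT.connected.preconnected subset_rfl hv)
  change (compOf G Tᶜ d).ncard ≤ (compOf G T v).ncard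
  rw [hCT]
  calc (compOf G Tᶜ d).ncard ≤ (compOf G Sᶜ d).ncard :=
        Set.ncard_le_ncard fun u hu ↦ hu.mono (Set.compl_subset_compl.mpr hST)
    _ ≤ S.ncard := hS.ncard_compOf_compl_le hG fun h ↦ hd (hST h)
    _ ≤ T.ncard := Set.ncard_le_ncard hST

end IsThinHull

lemma IsSafeSet.exists_isThinHull_superset [Finite V] (hG : G.Preconnected)
    (hS : IsSafeSet G S) : ∃ T, IsThinHull G S T ∧ S ⊆ T := by
  obtain ⟨s, hs⟩ := hS.1
  obtain ⟨T, hT, hmax⟩ := Set.exists_max_image {M | IsThinHull G S M}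
    (fun M ↦ (S ∩ M).ncard) (Set.toFinite _) ⟨_, isThinHull_compOf hs⟩
  refine ⟨T, hT, by_contra fun hST ↦ ?_⟩
  obtain ⟨M, hM, hlt⟩ := hT.exists_ncard_inter_lt hG hS hST
  exact (hmax M hM).not_gt hlt

lemma IsSafeSet.exists_isConnSafeSet [Finite V] (hG : G.Preconnected) (hS : IsSafeSet G S) :
    ∃ T, IsConnSafeSet G T ∧ T.ncard < 2 * S.ncard := by
  obtain ⟨T, hT, hST⟩ := hS.exists_isThinHull_superset hG
  refine ⟨T, hT.isConnSafeSet hG hS hST, ?_⟩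
  simpa [Set.inter_eq_self_of_subset_left hST] using hT.ncard_lt

lemma isSafeSet_univ [Nonempty V] : IsSafeSet G Set.univ :=
  ⟨Set.univ_nonempty, fun _ _ _ ⟨_, hv, _⟩ _ ↦ absurd trivial hv⟩

theorem stmt0 [Fintype V] (G : SimpleGraph V) (hG : G.Connected) :
    sNum G ≤ csNum G ∧ csNum G ≤ 2 * sNum G - 1 := by
  have := hG.nonempty
  obtain ⟨S, hS, hScard⟩ : sNum G ∈ {n | ∃ S : Set V, IsSafeSet G S ∧ S.ncard = n} :=
    Nat.sInf_mem ⟨_, Set.univ, isSafeSet_univ, rfl⟩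
  obtain ⟨T, hT, hTcard⟩ := hS.exists_isConnSafeSet hG.preconnected
  obtain ⟨T', hT', hT'card⟩ :
      csNum G ∈ {n | ∃ T : Set V, IsConnSafeSet G T ∧ T.ncard = n} :=
    Nat.sInf_mem ⟨_, T, hT, rfl⟩
  have hcs : csNum G ≤ T.ncard := Nat.sInf_le ⟨T, hT, rfl⟩
  have hs : sNum G ≤ csNum G := Nat.sInf_le ⟨T', hT'.1, hT'card⟩
  omega
end

section
/- If G is a connected graph and S is a safe set of G with |S| = k, then every vertex of degree at least 2k belongs to S. -/
variable {V : Type*}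

/-! If `v ∉ S`, the component `D` of `G - S` containing `v` contains `v` and all of its neighbours
outside `S`, so `|D| > deg v - |S| ≥ k`. By connectivity some edge joins `D` to a component `C` of
`G[S]`, and `|C| ≤ |S| = k < |D|` contradicts safeness. -/

namespace SimpleGraph

variable {G : SimpleGraph V} {S : Set V}

lemma reachIn_refl {v : V} (hv : v ∈ S) : ReachIn G S v v :=
  ⟨hv, hv, .refl _⟩

lemma reachIn_of_adj {u v : V} (hu : u ∈ S) (hv : v ∈ S) (h : G.Adj u v) : ReachIn G S u v :=
  ⟨hu, hv, Adj.reachable (G := G.induce S) (u := ⟨u, hu⟩) (v := ⟨v, hv⟩) h⟩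

lemma ReachIn.trans {u v w : V} (huv : ReachIn G S u v) (hvw : ReachIn G S v w) :
    ReachIn G S u w :=
  let ⟨hu, _, h₁⟩ := huv
  let ⟨_, hw, h₂⟩ := hvw
  ⟨hu, hw, h₁.trans h₂⟩

lemma ncard_setOf_reachIn_le [Finite V] (v : V) : {u | ReachIn G S u v}.ncard ≤ S.ncard :=
  Set.ncard_le_ncard fun _ hu => hu.1

lemma ncard_neighborSet_eq_degree [Fintype V] [DecidableRel G.Adj] (v : V) :
    (G.neighborSet v).ncard = G.degree v := by
  rw [← Nat.card_coe_set_eq, Nat.card_eq_fintype_card, card_neighborSet_eq_degree]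

lemma degree_lt_ncard_setOf_reachIn_compl_add_ncard [Fintype V] [DecidableRel G.Adj] {v : V}
    (hv : v ∉ S) : G.degree v < {u | ReachIn G Sᶜ u v}.ncard + S.ncard := by
  have hsub : insert v (G.neighborSet v \ S) ⊆ {u | ReachIn G Sᶜ u v} :=
    Set.insert_subset (reachIn_refl hv) fun u ⟨hadj, hu⟩ => reachIn_of_adj hu hv hadj.symm
  have hcard : (insert v (G.neighborSet v \ S)).ncard = (G.neighborSet v \ S).ncard + 1 :=
    Set.ncard_insert_of_notMem (fun h => G.irrefl h.1)
  calc G.degree v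
      = (G.neighborSet v).ncard := (ncard_neighborSet_eq_degree v).symm
    _ ≤ (G.neighborSet v \ S).ncard + S.ncard := Set.ncard_le_ncard_sdiff_add_ncard _ _
    _ < (insert v (G.neighborSet v \ S)).ncard + S.ncard := by omega
    _ ≤ {u | ReachIn G Sᶜ u v}.ncard + S.ncard :=
      Nat.add_le_add_right (Set.ncard_le_ncard hsub) _

/-- A walk from `v` into `S` must leave the component of `v` in `G - S`, and can only leave it
into `S`. -/
lemma Connected.setsAdj_setOf_reachIn (hG : G.Connected) (hS : S.Nonempty) {v : V}
    (hv : v ∉ S) :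
    ∃ b ∈ S, SetsAdj G {u | ReachIn G S u b} {u | ReachIn G Sᶜ u v} := by
  obtain ⟨s, hs⟩ := hS
  obtain ⟨d, -, hd, hd'⟩ := (hG.preconnected v s).some.exists_boundary_dart
    {u | ReachIn G Sᶜ u v} (reachIn_refl hv) fun h => h.1 hs
  have hbS : d.snd ∈ S := by
    by_contra hb
    exact hd' (ReachIn.trans (reachIn_of_adj hb hd.1 d.adj.symm) hd)
  exact ⟨d.snd, hbS, d.snd, reachIn_refl hbS, d.fst, hd, d.adj.symm⟩

end SimpleGraph

theorem stmt4 [Fintype V] (G : SimpleGraph V) [DecidableRel G.Adj]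
    (hG : G.Connected) (S : Set V) (k : ℕ) (hS : IsSafeSet G S) (hk : S.ncard = k)
    (v : V) (hv : 2 * k ≤ G.degree v) : v ∈ S := by
  by_contra hvS
  obtain ⟨b, hbS, hadj⟩ := hG.setsAdj_setOf_reachIn hS.1 hvS
  have hsafe := hS.2 _ _ ⟨b, hbS, rfl⟩ ⟨v, hvS, rfl⟩ hadj
  have hC := SimpleGraph.ncard_setOf_reachIn_le (G := G) (S := S) b
  have hD := SimpleGraph.degree_lt_ncard_setOf_reachIn_compl_add_ncard (G := G) hvS
  omega
end

section
/- Let G be a connected graph, let S be a nonempty safe set of G with |S| ≤ s, and let X ⊆ V(G) be a connected set with |X| = s+1. Then X ∩ S ≠ ∅. -/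
variable {V : Type*}

lemma reach_mono {G : SimpleGraph V} {A B : Set V} (h : A ⊆ B) {u v : V}
    (hu : u ∈ A) (hv : v ∈ A)
    (hr : (G.induce A).Reachable ⟨u, hu⟩ ⟨v, hv⟩) :
    (G.induce B).Reachable ⟨u, h hu⟩ ⟨v, h hv⟩ :=
  hr.map ⟨Set.inclusion h, fun hadj => hadj⟩

lemma exists_boundary {G : SimpleGraph V} (S : Set V) {a b : V} (p : G.Walk a b)
    (ha : a ∈ Sᶜ) (hb : b ∈ S) :
    ∃ u w, u ∈ Sᶜ ∧ w ∈ S ∧ G.Adj u w ∧ ReachIn G Sᶜ a u := by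
  induction p with
  | nil => exact absurd hb ha
  | @cons a c b h p ih =>
    by_cases hc : c ∈ S
    · exact ⟨a, c, ha, hc, h, ha, ha, SimpleGraph.Reachable.refl _⟩
    · obtain ⟨u, w, hu, hw, hadj, hc', hu', hr⟩ := ih hc hb
      have hac : (G.induce Sᶜ).Adj ⟨a, ha⟩ ⟨c, hc'⟩ := h
      exact ⟨u, w, hu, hw, hadj, ha, hu', hac.reachable.trans hr⟩

theorem stmt5 [Fintype V] (G : SimpleGraph V) (hG : G.Connected)
    (S X : Set V) (s : ℕ) (hS : IsSafeSet G S) (hcard : S.ncard ≤ s)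
    (hXconn : (G.induce X).Connected) (hX : X.ncard = s + 1) :
    (X ∩ S).Nonempty := by
  by_contra hne
  rw [Set.not_nonempty_iff_eq_empty] at hne
  have hXS : X ⊆ Sᶜ := fun x hx hxS =>
    Set.eq_empty_iff_forall_notMem.mp hne x ⟨hx, hxS⟩
  have hXne : X.Nonempty := by
    rw [← Set.ncard_pos (Set.toFinite X), hX]; omega
  obtain ⟨x₀, hx₀⟩ := hXne
  obtain ⟨v₀, hv₀⟩ := hS.1
  obtain ⟨p⟩ := hG.preconnected x₀ v₀
  obtain ⟨u, w, hu, hw, hadj, haru⟩ := exists_boundary S p (hXS hx₀) hv₀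
  set D : Set V := {z | ReachIn G Sᶜ z x₀} with hD
  set C : Set V := {z | ReachIn G S z w} with hC
  have hDcomp : IsCompOf G Sᶜ D := ⟨x₀, hXS hx₀, rfl⟩
  have hCcomp : IsCompOf G S C := ⟨w, hw, rfl⟩
  have huD : u ∈ D := by
    obtain ⟨h1, h2, hr⟩ := haru
    exact ⟨h2, h1, hr.symm⟩
  have hwC : w ∈ C := ⟨hw, hw, SimpleGraph.Reachable.refl _⟩
  have hAdj : SetsAdj G C D := ⟨w, hwC, u, huD, hadj.symm⟩
  have hXD : X ⊆ D := by
    intro x hx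
    obtain ⟨hr⟩ := hXconn.preconnected ⟨x, hx⟩ ⟨x₀, hx₀⟩
    exact ⟨hXS hx, hXS hx₀, reach_mono hXS hx hx₀ ⟨hr⟩⟩
  have hCS : C ⊆ S := fun z hz => hz.1
  have h1 : D.ncard ≤ C.ncard := hS.2 C D hCcomp hDcomp hAdj
  have h2 : C.ncard ≤ S.ncard := Set.ncard_le_ncard hCS (Set.toFinite S)
  have h3 : X.ncard ≤ D.ncard := Set.ncard_le_ncard hXD (Set.toFinite D)
  omega
end

section
/- Let G be a graph with a partition of V(G) into twin sets T₁,…,T_k and let S ⊆ V(G). Two vertices u ∈ T_i ∩ S and v ∈ T_{i'} ∩ S lie in the same connected component of G[S] if and only if T_i and T_{i'} are reachable in S, i.e., either T_i = T_{i'} is a clique, or there is a sequence of twin sets T_{i_0} = T_i, T_{i_1}, …, T_{i_ℓ} = T_{i'} with ℓ ≥ 1 such that each T_{i_j} intersects S and consecutive sets in the sequence are adjacent. -/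
variable {V : Type*}

/-- Two vertices are twins if they have the same neighbors, apart from each other. -/
def AreTwins (G : SimpleGraph V) (u v : V) : Prop :=
  G.neighborSet u \ {v} = G.neighborSet v \ {u}

/-- Two twin sets are adjacent: every vertex of one is adjacent to every
(distinct) vertex of the other. -/
def TwinSetsAdj (G : SimpleGraph V) (A B : Set V) : Prop :=
  ∀ a ∈ A, ∀ b ∈ B, a ≠ b → G.Adj a b

/-- Twin sets `T i` and `T i'` are reachable in `S`: either they are equal and form
a clique, or there is a sequence of twin sets, each meeting `S`, starting at `T i`,
ending at `T i'`, with consecutive sets adjacent. -/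
def ReachableTwinSets {k : ℕ} (G : SimpleGraph V) (T : Fin k → Set V) (S : Set V)
    (i i' : Fin k) : Prop :=
  (i = i' ∧ G.IsClique (T i)) ∨
  ∃ ℓ : ℕ, 1 ≤ ℓ ∧ ∃ f : Fin (ℓ + 1) → Fin k, f 0 = i ∧ f (Fin.last ℓ) = i' ∧
    (∀ j, (T (f j) ∩ S).Nonempty) ∧
    ∀ j : Fin ℓ, TwinSetsAdj G (T (f j.castSucc)) (T (f j.succ))

/-!
Twins see the same neighbours, so an edge from a twin set `A` to a twin set `B` that is equal
to or disjoint from `A` makes every vertex of `A` adjacent to every other vertex of `B`. Hence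
a walk in `G[S]` runs through a sequence of adjacent twin sets meeting `S`. Conversely, picking
a vertex of `S` in each set of such a sequence, with ends `u` and `v`, gives a sequence of
vertices of `S` whose consecutive distinct members are adjacent.
-/

theorem SimpleGraph.reachable_of_ne_imp_adj_succ {W : Type*} {H : SimpleGraph W} {ℓ : ℕ}
    (x : Fin (ℓ + 1) → W)
    (h : ∀ j : Fin ℓ, x j.castSucc ≠ x j.succ → H.Adj (x j.castSucc) (x j.succ)) :
    H.Reachable (x 0) (x (Fin.last ℓ)) := by
  suffices ∀ j, H.Reachable (x 0) (x j) from this _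
  intro j
  induction j using Fin.induction with
  | zero => rfl
  | succ j ih =>
    refine ih.trans ?_
    by_cases hj : x j.castSucc = x j.succ
    · rw [hj]
    · exact (h j hj).reachable

theorem Fin.exists_forall_mem_of_nonempty {ℓ : ℕ} (hℓ : 1 ≤ ℓ) {A : Fin (ℓ + 1) → Set V}
    (hA : ∀ j, (A j).Nonempty) {u v : V} (hu : u ∈ A 0) (hv : v ∈ A (Fin.last ℓ)) :
    ∃ x : Fin (ℓ + 1) → V, x 0 = u ∧ x (Fin.last ℓ) = v ∧ ∀ j, x j ∈ A j := by
  classical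
  have hlast : Fin.last ℓ ≠ 0 := by simp [Fin.ext_iff]; omega
  refine ⟨fun j => if j = 0 then u else if j = Fin.last ℓ then v else (hA j).some,
    by simp, by simp [hlast], fun j => ?_⟩
  dsimp only
  split_ifs with h0 hl
  · exact h0 ▸ hu
  · exact hl ▸ hv
  · exact (hA j).some_mem

section InducedReachability

variable {G : SimpleGraph V} {S : Set V}

theorem ReachIn.exists_chain {u v : V} (h : ReachIn G S u v) :
    ∃ ℓ, ∃ x : Fin (ℓ + 1) → V, x 0 = u ∧ x (Fin.last ℓ) = v ∧ (∀ j, x j ∈ S) ∧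
      ∀ j : Fin ℓ, G.Adj (x j.castSucc) (x j.succ) := by
  obtain ⟨_, _, ⟨p⟩⟩ := h
  exact ⟨p.length, fun j => p.getVert j, by simp, by simp, fun j => (p.getVert j).2,
    fun j => p.adj_getVert_succ j.2⟩

theorem reachIn_of_chain {ℓ : ℕ} (x : Fin (ℓ + 1) → V) (hS : ∀ j, x j ∈ S)
    (hadj : ∀ j : Fin ℓ, x j.castSucc ≠ x j.succ → G.Adj (x j.castSucc) (x j.succ)) :
    ReachIn G S (x 0) (x (Fin.last ℓ)) :=
  ⟨hS 0, hS _, SimpleGraph.reachable_of_ne_imp_adj_succ (H := G.induce S)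
    (fun j => ⟨x j, hS j⟩) fun j hne => hadj j fun h => hne (Subtype.ext h)⟩

end InducedReachability

section Twins

variable {G : SimpleGraph V}

def IsTwinSet (G : SimpleGraph V) (A : Set V) : Prop :=
  ∀ u ∈ A, ∀ v ∈ A, AreTwins G u v

theorem AreTwins.adj_of_adj {a b c : V} (h : AreTwins G a b) (hac : G.Adj a c) (hcb : c ≠ b) :
    G.Adj b c :=
  ((Set.ext_iff.mp h c).mp ⟨hac, hcb⟩).1

theorem IsTwinSet.isClique_of_adj {A : Set V} (hA : IsTwinSet G A) {a b : V} (ha : a ∈ A)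
    (hb : b ∈ A) (hab : G.Adj a b) : G.IsClique A := by
  have adj_a : ∀ x ∈ A, x ≠ a → G.Adj a x := by
    intro x hx hxa
    rcases eq_or_ne x b with rfl | _
    · exact hab
    · exact ((hA b hb x hx).adj_of_adj hab.symm hxa.symm).symm
  intro x hx y hy hxy
  rcases eq_or_ne x a with rfl | hxa
  · exact adj_a y hy (Ne.symm hxy)
  · exact ((hA a ha y hy).adj_of_adj (adj_a x hx hxa) hxy).symm

theorem IsTwinSet.twinSetsAdj_of_adj {A B : Set V} (hA : IsTwinSet G A) (hB : IsTwinSet G B)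
    (hAB : A = B ∨ Disjoint A B) {a b : V} (ha : a ∈ A) (hb : b ∈ B) (hab : G.Adj a b) :
    TwinSetsAdj G A B := by
  rcases hAB with rfl | hAB
  · exact fun x hx y hy hxy => hA.isClique_of_adj ha hb hab hx hy hxy
  intro x hx y hy _
  have hxb : G.Adj x b := by
    rcases eq_or_ne x a with rfl | hxa
    · exact hab
    · exact (hA a ha x hx).adj_of_adj hab
        (ne_of_mem_of_not_mem hb (Set.disjoint_left.mp hAB hx))
  rcases eq_or_ne y b with rfl | _
  · exact hxb
  · exact ((hB b hb y hy).adj_of_adj hxb.symm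
      (ne_of_mem_of_not_mem hx (Set.disjoint_right.mp hAB hy))).symm

end Twins

section TwinPartition

variable {G : SimpleGraph V} {k : ℕ} {T : Fin k → Set V}

theorem eq_or_disjoint_of_existsUnique_mem (hcover : ∀ v : V, ∃! i, v ∈ T i) (i j : Fin k) :
    T i = T j ∨ Disjoint (T i) (T j) := by
  rcases eq_or_ne i j with rfl | hij
  · exact .inl rfl
  · exact .inr (Set.disjoint_left.mpr fun x hi hj => hij ((hcover x).unique hi hj))

theorem reachableTwinSets_of_chain (S : Set V) (hcover : ∀ v : V, ∃! i, v ∈ T i)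
    (htwin : ∀ i, IsTwinSet G (T i)) {i i' : Fin k} {ℓ : ℕ} (hℓ : 1 ≤ ℓ)
    (x : Fin (ℓ + 1) → V) (hx0 : x 0 ∈ T i) (hxl : x (Fin.last ℓ) ∈ T i')
    (hxS : ∀ j, x j ∈ S) (hadj : ∀ j : Fin ℓ, G.Adj (x j.castSucc) (x j.succ)) :
    ReachableTwinSets G T S i i' := by
  choose idx hidx using fun v => (hcover v).exists
  exact .inr ⟨ℓ, hℓ, idx ∘ x, (hcover _).unique (hidx _) hx0, (hcover _).unique (hidx _) hxl,
    fun j => ⟨x j, hidx _, hxS j⟩, fun j => (htwin _).twinSetsAdj_of_adj (htwin _)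
      (eq_or_disjoint_of_existsUnique_mem hcover _ _) (hidx _) (hidx _) (hadj j)⟩

end TwinPartition

theorem stmt7 (G : SimpleGraph V) (S : Set V) {k : ℕ} (T : Fin k → Set V)
    (hcover : ∀ v : V, ∃! i, v ∈ T i)
    (htwin : ∀ i, ∀ u ∈ T i, ∀ v ∈ T i, AreTwins G u v)
    (i i' : Fin k) (u v : V)
    (hu : u ∈ T i ∩ S) (hv : v ∈ T i' ∩ S) (huv : u ≠ v) :
    ReachIn G S u v ↔ ReachableTwinSets G T S i i' := by
  constructor
  · intro h
    obtain ⟨ℓ, x, rfl, rfl, hxS, hxadj⟩ := h.exists_chain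
    have hℓ : 1 ≤ ℓ := Nat.one_le_iff_ne_zero.mpr (by rintro rfl; exact huv rfl)
    exact reachableTwinSets_of_chain S hcover htwin hℓ x hu.1 hv.1 hxS hxadj
  · rintro (⟨rfl, hclique⟩ | ⟨ℓ, hℓ, f, rfl, rfl, hfS, hfadj⟩)
    · exact ⟨hu.2, hv.2, SimpleGraph.Adj.reachable (hclique hu.1 hv.1 huv)⟩
    · obtain ⟨x, rfl, rfl, hx⟩ := Fin.exists_forall_mem_of_nonempty hℓ hfS hu hv
      exact reachIn_of_chain x (fun j => (hx j).2) fun j hne =>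
        hfadj j _ (hx _).1 _ (hx _).1 hne
end

section
/- For every graph G, the neighborhood diversity is at most 2^vc + vc, where vc is the vertex cover number: nd(G) ≤ 2^{vc(G)} + vc(G). -/
variable {V : Type*}

/-- The vertex cover number. -/
noncomputable def vcNum [Fintype V] (G : SimpleGraph V) : ℕ :=
  sInf {n | ∃ X : Set V, (∀ u v : V, G.Adj u v → u ∈ X ∨ v ∈ X) ∧ X.ncard = n}

/-- The neighborhood diversity: minimum number of parts of a partition of the
vertex set into sets of pairwise twin vertices. -/
noncomputable def ndNum [Fintype V] (G : SimpleGraph V) : ℕ :=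
  sInf {k | ∃ T : Fin k → Set V, (∀ v : V, ∃! i, v ∈ T i) ∧
    ∀ i, ∀ u ∈ T i, ∀ v ∈ T i, AreTwins G u v}

/-! Outside a vertex cover `X` every neighbour lies in `X`, so vertices outside `X` with the same
neighbours in `X` have the same neighbourhood and are twins. Labelling those by their neighbourhood
in `X`, and each vertex of `X` by itself, gives a twin partition with at most `2 ^ |X| + |X|` parts. -/

namespace SimpleGraph

variable {G : SimpleGraph V}

theorem areTwins_of_neighborSet_eq {u v : V} (h : G.neighborSet u = G.neighborSet v) :
    AreTwins G u v := by
  have hu : u ∉ G.neighborSet v := h ▸ G.notMem_neighborSet_self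
  have hv : v ∉ G.neighborSet u := h ▸ G.notMem_neighborSet_self
  rw [AreTwins, Set.sdiff_singleton_eq_self hv, Set.sdiff_singleton_eq_self hu, h]

theorem IsVertexCover.neighborSet_eq_of_forall_adj_iff {X : Set V} (hX : G.IsVertexCover X)
    {u v : V} (hu : u ∉ X) (hv : v ∉ X) (h : ∀ x ∈ X, G.Adj u x ↔ G.Adj v x) :
    G.neighborSet u = G.neighborSet v := by
  ext w
  constructor
  · intro huw
    exact (h w ((hX huw).resolve_left hu)).1 huw
  · intro hvw
    exact (h w ((hX hvw).resolve_left hv)).2 hvw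

theorem ndNum_le_of_twin_labelling [Fintype V] {ι : Type*} [Finite ι] (c : V → ι)
    (hc : ∀ u v, c u = c v → AreTwins G u v) : ndNum G ≤ Nat.card ι := by
  let e : ι ≃ Fin (Nat.card ι) := Finite.equivFin ι
  refine Nat.sInf_le ⟨fun j => {v | e (c v) = j}, fun v => ⟨e (c v), rfl, fun _ h => h.symm⟩, ?_⟩
  rintro j u rfl v hv
  exact hc u v (e.injective hv.symm)

theorem exists_isVertexCover_ncard_eq_vcNum [Fintype V] (G : SimpleGraph V) :
    ∃ X : Set V, G.IsVertexCover X ∧ X.ncard = vcNum G :=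
  Nat.sInf_mem (s := {n | ∃ X : Set V, G.IsVertexCover X ∧ X.ncard = n})
    ⟨_, Set.univ, isVertexCover_univ, rfl⟩

open Classical in
noncomputable def coverLabel (G : SimpleGraph V) (X : Set V) (v : V) : Set X ⊕ X :=
  if hv : v ∈ X then .inr ⟨v, hv⟩ else .inl {x | G.Adj v x}

theorem IsVertexCover.areTwins_of_coverLabel_eq {X : Set V} (hX : G.IsVertexCover X) {u v : V}
    (h : coverLabel G X u = coverLabel G X v) : AreTwins G u v := by
  unfold coverLabel at h
  split_ifs at h with hu hv hv
  · cases h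
    rfl
  · apply areTwins_of_neighborSet_eq
    refine hX.neighborSet_eq_of_forall_adj_iff hu hv fun x hx => ?_
    simpa using Set.ext_iff.1 (Sum.inl_injective h) ⟨x, hx⟩

theorem IsVertexCover.ndNum_le_two_pow_ncard_add_ncard [Fintype V] {X : Set V}
    (hX : G.IsVertexCover X) : ndNum G ≤ 2 ^ X.ncard + X.ncard := by
  have hcard : Nat.card (Set X ⊕ X) = 2 ^ X.ncard + X.ncard := by
    classical
    rw [Nat.card_sum, ← Nat.card_coe_set_eq X, Nat.card_eq_fintype_card (α := Set X),
      Fintype.card_set, Nat.card_eq_fintype_card]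
  exact hcard ▸ ndNum_le_of_twin_labelling _ fun _ _ => hX.areTwins_of_coverLabel_eq

end SimpleGraph

theorem stmt8 [Fintype V] (G : SimpleGraph V) :
    ndNum G ≤ 2 ^ vcNum G + vcNum G := by
  obtain ⟨X, hX, hXcard⟩ := G.exists_isVertexCover_ncard_eq_vcNum
  rw [← hXcard]
  exact hX.ndNum_le_two_pow_ncard_add_ncard
end

section
/- In the reduction graph H built from a bipartite RBDS instance (G=(R,B;E), k): if D ⊆ B dominates R and |D| ≤ k, then S = {u} ∪ R ∪ D is a connected safe set of H of size at most s = k + |R| + 1. -/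
variable {V : Type*}

/-- Vertices of the reduction graph `H` built from an RBDS instance `(R, B; E, k)`,
where `s` is the target safe-set size: the hub `u`, the red and blue vertices,
`2s` pendant leaves at the hub and at each red vertex, and for each red vertex a
star `K_{1,s-1}` (a center and `s - 1` leaves). -/
inductive HVert (R B : Type*) (s : ℕ) : Type _
  | hub : HVert R B s
  | red : R → HVert R B s
  | blue : B → HVert R B s
  | pendHub : Fin (2 * s) → HVert R B s
  | pendRed : R → Fin (2 * s) → HVert R B s
  | starCenter : R → HVert R B s
  | starLeaf : R → Fin (s - 1) → HVert R B s

/-- The (one-sided) adjacency relation of the reduction graph. -/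
def HRel (R B : Type*) (s : ℕ) (E : R → B → Prop) :
    HVert R B s → HVert R B s → Prop
  | .red r, .blue b => E r b
  | .hub, .blue _ => True
  | .hub, .pendHub _ => True
  | .red r, .pendRed r' _ => r = r'
  | .red r, .starCenter r' => r = r'
  | .starCenter r, .starLeaf r' _ => r = r'
  | _, _ => False

/-- The reduction graph `H`. -/
def HGraph (R B : Type*) (s : ℕ) (E : R → B → Prop) : SimpleGraph (HVert R B s) :=
  SimpleGraph.fromRel (HRel R B s E)

/-! Since `D` dominates `R`, every red vertex reaches the hub `u` through `D`, so
`S = {u} ∪ R ∪ D` induces a connected subgraph with `|S| = 1 + |R| + k = s`. Removing `S`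
leaves only isolated blue vertices, pendant leaves and the stars `K_{1,s-1}`, so every
component of `H - S` has at most `s` vertices. -/

section SafeSet

variable {α : Type*} {G : SimpleGraph V}

lemma ReachIn.map_eq {T : Set V} {f : V → α}
    (hf : ∀ x ∈ T, ∀ y ∈ T, G.Adj x y → f x = f y) {u v : V} (h : ReachIn G T u v) :
    f u = f v := by
  suffices ∀ a b : T, Relation.ReflTransGen (G.induce T).Adj a b → f a = f b by
    obtain ⟨hu, hv, hreach⟩ := h
    exact this ⟨u, hu⟩ ⟨v, hv⟩ ((SimpleGraph.reachable_iff_reflTransGen _ _).mp hreach)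
  intro a b hab
  induction hab with
  | refl => rfl
  | tail _ hadj ih => exact ih.trans (hf _ (Subtype.prop _) _ (Subtype.prop _) hadj)

lemma isCompOf_eq_of_connected {S C : Set V} (hS : (G.induce S).Connected)
    (hC : IsCompOf G S C) : C = S := by
  obtain ⟨v, hv, rfl⟩ := hC
  ext u
  exact ⟨fun ⟨hu, _, _⟩ => hu, fun hu => ⟨hu, hv, hS.preconnected _ _⟩⟩

lemma isConnSafeSet_of_connected {S : Set V} (hS : (G.induce S).Connected)
    (hcomp : ∀ v ∉ S, {u | ReachIn G Sᶜ u v}.ncard ≤ S.ncard) : IsConnSafeSet G S := by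
  refine ⟨⟨Set.nonempty_coe_sort.mp hS.nonempty, ?_⟩, hS⟩
  rintro C _ hC ⟨v, hv, rfl⟩ -
  rw [isCompOf_eq_of_connected hS hC]
  exact hcomp v hv

end SafeSet

open SimpleGraph

namespace HVert

variable {R B : Type*} {s : ℕ}

/-- Collapses each star onto its center, so that every component of `H - ({u} ∪ R ∪ D)`
lies in a fibre. -/
def collapse : HVert R B s → HVert R B s
  | starLeaf r _ => starCenter r
  | v => v

lemma collapse_fiber_starCenter (r : R) :
    {u : HVert R B s | u.collapse = starCenter r}
      = insert (starCenter r) (Set.range (starLeaf r)) := by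
  ext u
  cases u <;> simp [collapse, eq_comm]

lemma ncard_collapse_fiber_starCenter (hs : 1 ≤ s) (r : R) :
    {u : HVert R B s | u.collapse = starCenter r}.ncard = s := by
  rw [collapse_fiber_starCenter, Set.ncard_insert_of_notMem (by simp) (Set.finite_range _),
    Set.ncard_range_of_injective fun _ _ h => (starLeaf.inj h).2, Nat.card_eq_fintype_card,
    Fintype.card_fin]
  omega

lemma encard_collapse_fiber_le (hs : 1 ≤ s) (v : HVert R B s) :
    {u : HVert R B s | u.collapse = v.collapse}.encard ≤ s := by
  by_cases hstar : ∃ r, v.collapse = starCenter r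
  · obtain ⟨r, hr⟩ := hstar
    have hfin : {u : HVert R B s | u.collapse = starCenter r}.Finite := by
      rw [collapse_fiber_starCenter]
      exact (Set.finite_range _).insert _
    rw [hr, ← hfin.cast_ncard_eq, ncard_collapse_fiber_starCenter hs]
  · push Not at hstar
    have hsub : {u : HVert R B s | u.collapse = v.collapse} ⊆ {v} := by
      intro u hu
      cases u <;> cases v <;> simp_all [collapse]
    calc _ ≤ ({v} : Set (HVert R B s)).encard := Set.encard_le_encard hsub
      _ ≤ s := by rw [Set.encard_singleton]; exact_mod_cast hs

end HVert

section Reduction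

variable {R B : Type*} {s : ℕ} {E : R → B → Prop} {D : Set B}

def hubRedBlue (R : Type*) {B : Type*} (s : ℕ) (D : Set B) : Set (HVert R B s) :=
  {HVert.hub} ∪ HVert.red '' Set.univ ∪ HVert.blue '' D

lemma mem_hubRedBlue {x : HVert R B s} :
    x ∈ hubRedBlue R s D ↔ x = .hub ∨ (∃ r, x = .red r) ∨ ∃ b ∈ D, x = .blue b := by
  simp [hubRedBlue, eq_comm, or_assoc]

lemma ncard_hubRedBlue [Fintype R] (hD : D.Finite) :
    (hubRedBlue R s D).ncard = 1 + Fintype.card R + D.ncard := by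
  have hfin : ({HVert.hub} ∪ HVert.red '' Set.univ : Set (HVert R B s)).Finite :=
    (Set.finite_singleton _).union (Set.finite_univ.image _)
  rw [hubRedBlue, Set.ncard_union_eq (by simp [Set.disjoint_left]) hfin (hD.image _),
    Set.ncard_union_eq (by simp) (Set.finite_singleton _) (Set.finite_univ.image _),
    Set.ncard_singleton, Set.ncard_image_of_injective _ fun _ _ => HVert.red.inj,
    Set.ncard_univ, Nat.card_eq_fintype_card,
    Set.ncard_image_of_injective _ fun _ _ => HVert.blue.inj]

lemma HGraph.collapse_eq_of_adj {x y : HVert R B s} (hx : x ∉ hubRedBlue R s D)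
    (hy : y ∉ hubRedBlue R s D) (h : (HGraph R B s E).Adj x y) : x.collapse = y.collapse := by
  rw [HGraph, SimpleGraph.fromRel_adj] at h
  obtain ⟨-, h | h⟩ := h <;>
  · cases x <;> cases y <;> simp_all [HRel, HVert.collapse, mem_hubRedBlue]

lemma HGraph.adj_hub_blue (b : B) : (HGraph R B s E).Adj .hub (.blue b) := by
  simp [HGraph, HRel]

lemma HGraph.adj_red_blue {r : R} {b : B} (h : E r b) :
    (HGraph R B s E).Adj (.red r) (.blue b) := by
  simpa [HGraph, HRel] using h

lemma connected_induce_hubRedBlue (hdom : ∀ r, ∃ b ∈ D, E r b) :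
    ((HGraph R B s E).induce (hubRedBlue R s D)).Connected := by
  have hhub : HVert.hub ∈ hubRedBlue R s D := by simp [mem_hubRedBlue]
  have hblue {b} (hb : b ∈ D) : HVert.blue b ∈ hubRedBlue R s D := by simp [mem_hubRedBlue, hb]
  have hreach : ∀ x : hubRedBlue R s D,
      ((HGraph R B s E).induce (hubRedBlue R s D)).Reachable x ⟨.hub, hhub⟩ := by
    have hblue_hub {b} (hb : b ∈ D) :
        ((HGraph R B s E).induce (hubRedBlue R s D)).Reachable ⟨_, hblue hb⟩ ⟨.hub, hhub⟩ :=
      (induce_adj.mpr (HGraph.adj_hub_blue b).symm).reachable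
    rintro ⟨x, hx⟩
    obtain rfl | ⟨r, rfl⟩ | ⟨b, hb, rfl⟩ := mem_hubRedBlue.mp hx
    · rfl
    · obtain ⟨b, hb, hE⟩ := hdom r
      have hred_blue :
          ((HGraph R B s E).induce (hubRedBlue R s D)).Adj ⟨_, hx⟩ ⟨_, hblue hb⟩ :=
        induce_adj.mpr (HGraph.adj_red_blue hE)
      exact hred_blue.reachable.trans (hblue_hub hb)
    · exact hblue_hub hb
  have : Nonempty (hubRedBlue R s D) := ⟨⟨_, hhub⟩⟩
  exact ⟨fun x y => (hreach x).trans (hreach y).symm⟩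

lemma ncard_reachIn_compl_hubRedBlue_le (hs : 1 ≤ s) (v : HVert R B s) :
    {u | ReachIn (HGraph R B s E) (hubRedBlue R s D)ᶜ u v}.ncard ≤ s := by
  have hsub : {u | ReachIn (HGraph R B s E) (hubRedBlue R s D)ᶜ u v}
      ⊆ {u | u.collapse = v.collapse} := fun _ h =>
    h.map_eq fun _ hx _ hy => HGraph.collapse_eq_of_adj hx hy
  have hle : (_ : ℕ∞) ≤ s := (Set.ncard_le_encard _).trans
    ((Set.encard_le_encard hsub).trans (HVert.encard_collapse_fiber_le hs v))
  exact_mod_cast hle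

end Reduction

theorem stmt10_general {R B : Type*} [Fintype R] [Fintype B] (E : R → B → Prop) (k : ℕ)
    (D : Set B)
    (hdom : ∀ r : R, ∃ b ∈ D, E r b) (hD : D.ncard = k) :
    IsConnSafeSet (HGraph R B (k + Fintype.card R + 1) E)
      ({HVert.hub} ∪ HVert.red '' Set.univ ∪ HVert.blue '' D) ∧
    ({HVert.hub} ∪ HVert.red '' Set.univ ∪ HVert.blue '' D :
        Set (HVert R B (k + Fintype.card R + 1))).ncard
      ≤ k + Fintype.card R + 1 := by
  change IsConnSafeSet _ (hubRedBlue R _ D) ∧ (hubRedBlue R _ D).ncard ≤ _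
  have hcard : (hubRedBlue R (k + Fintype.card R + 1) D).ncard = k + Fintype.card R + 1 := by
    rw [ncard_hubRedBlue D.toFinite, hD]
    omega
  refine ⟨isConnSafeSet_of_connected (connected_induce_hubRedBlue hdom) fun v _ => ?_, hcard.le⟩
  rw [hcard]
  exact ncard_reachIn_compl_hubRedBlue_le (by omega) v

theorem stmt10 {R B : Type*} [Fintype R] [Fintype B] (E : R → B → Prop) (k : ℕ)
    (hk : k < Fintype.card R) (D : Set B)
    (hdom : ∀ r : R, ∃ b ∈ D, E r b) (hD : D.ncard = k) :
    IsConnSafeSet (HGraph R B (k + Fintype.card R + 1) E)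
      ({HVert.hub} ∪ HVert.red '' Set.univ ∪ HVert.blue '' D) ∧
    ({HVert.hub} ∪ HVert.red '' Set.univ ∪ HVert.blue '' D :
        Set (HVert R B (k + Fintype.card R + 1))).ncard
      ≤ k + Fintype.card R + 1 :=
  stmt10_general E k D hdom hD
end

section
/- If G is a connected graph with at least 2 vertices and X is a vertex cover of G, then every superset S of X that is non-empty is a safe set provided each component of G − S has size at most |S|; in particular, any minimum vertex cover X of a connected graph G with |X| ≥ 1 is itself a safe set, so s(G) ≤ vc(G), and cs(G) ≤ 2·vc(G). -/
/-!
If `S` contains a vertex cover then `G - S` has no edges, so its components are single vertices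
and cannot be larger than any component of `G[S]`; hence a nonempty superset of a vertex cover is
safe, and a minimum vertex cover is nonempty as soon as `G` has an edge.

For the connected bound: if `G[S]` is disconnected, some vertex outside `S` is adjacent to two
of its components, since otherwise a component of `G[S]` together with its neighbours would be
closed under adjacency in the connected graph `G` (all neighbours of a vertex outside `S` lie in
`S`). Adding such a vertex lowers the number of components, so a minimum vertex cover `X`, whose
induced graph has at most `|X|` components, grows by fewer than `|X|` vertices into a connected
safe set.
-/

variable {V : Type*}

open SimpleGraph

variable {G : SimpleGraph V} {S : Set V}

theorem SimpleGraph.IsVertexCover.induce_compl_eq_bot (hS : G.IsVertexCover S) :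
    G.induce Sᶜ = ⊥ := by
  ext u v
  simp only [comap_adj, Function.Embedding.subtype_apply, bot_adj, iff_false]
  intro huv
  rcases hS huv with h | h
  exacts [u.2 h, v.2 h]

theorem IsCompOf.ncard_pos [Finite V] {C : Set V} (hC : IsCompOf G S C) : 0 < C.ncard := by
  obtain ⟨v, hv, rfl⟩ := hC
  exact (Set.ncard_pos (Set.toFinite _)).mpr ⟨v, hv, hv, .refl _⟩

theorem IsCompOf.ncard_eq_one_of_isVertexCover {D : Set V} (hS : G.IsVertexCover S)
    (hD : IsCompOf G Sᶜ D) : D.ncard = 1 := by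
  obtain ⟨v, hv, rfl⟩ := hD
  suffices {u | ReachIn G Sᶜ u v} = {v} by rw [this, Set.ncard_singleton]
  ext u
  refine ⟨fun ⟨_, _, h⟩ => ?_, fun hu => ⟨hu ▸ hv, hv, by subst hu; rfl⟩⟩
  rw [hS.induce_compl_eq_bot, reachable_bot] at h
  exact congrArg Subtype.val h

theorem isSafeSet_of_isVertexCover [Finite V] (hS : G.IsVertexCover S) (hne : S.Nonempty) :
    IsSafeSet G S :=
  ⟨hne, fun _ _ hC hD _ => (hD.ncard_eq_one_of_isVertexCover hS).symm ▸ hC.ncard_pos⟩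

theorem SimpleGraph.Reachable.mem_of_forall_adj_mem {K : Set V} {u v : V} (h : G.Reachable u v)
    (hu : u ∈ K) (hK : ∀ x y, G.Adj x y → x ∈ K → y ∈ K) : v ∈ K := by
  by_contra hv
  obtain ⟨p⟩ := h
  obtain ⟨d, -, hd₁, hd₂⟩ := p.exists_boundary_dart K hu hv
  exact hd₂ (hK _ _ d.adj hd₁)

theorem exists_adj_adj_of_not_preconnected (hG : G.Preconnected) (hS : G.IsVertexCover S)
    (hdis : ¬(G.induce S).Preconnected) :
    ∃ w ∉ S, ∃ x y : S, G.Adj w x ∧ G.Adj w y ∧ ¬(G.induce S).Reachable x y := by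
  by_contra! H
  apply hdis
  intro a b
  set K : Set V := {v | ∃ x : S, (G.induce S).Reachable a x ∧ (v = x ∨ G.Adj x v)}
  have hK : ∀ u v, G.Adj u v → u ∈ K → v ∈ K := by
    rintro u v huv ⟨x, hax, rfl | hxu⟩
    · exact ⟨x, hax, .inr huv⟩
    by_cases hu : u ∈ S
    · exact ⟨⟨u, hu⟩, hax.trans (Adj.reachable (G := G.induce S) hxu), .inr huv⟩
    · have hv : v ∈ S := (hS huv).resolve_left hu
      exact ⟨⟨v, hv⟩, hax.trans (H u hu x ⟨v, hv⟩ hxu.symm huv), .inl rfl⟩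
  obtain ⟨x, hax, hxb⟩ := (hG a b).mem_of_forall_adj_mem (K := K) ⟨a, .refl _, .inl rfl⟩ hK
  rcases hxb with hxb | hxb
  · rwa [← Subtype.ext hxb] at hax
  · exact hax.trans (Adj.reachable (G := G.induce S) hxb)

theorem card_connectedComponent_insert_lt [Finite V] {w : V} (hw : w ∉ S) {x y : S}
    (hwx : G.Adj w x) (hwy : G.Adj w y) (hxy : ¬(G.induce S).Reachable x y) :
    Nat.card (G.induce (insert w S)).ConnectedComponent <
      Nat.card (G.induce S).ConnectedComponent := by
  have hle : S ≤ insert w S := Set.subset_insert w S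
  set f := ConnectedComponent.map (G.induceHomOfLE hle).toHom
  have hwx' : (G.induce (insert w S)).Adj ⟨w, Set.mem_insert w S⟩ ⟨x, hle x.2⟩ := hwx
  have hwy' : (G.induce (insert w S)).Adj ⟨w, Set.mem_insert w S⟩ ⟨y, hle y.2⟩ := hwy
  have hsurj : f.Surjective := by
    refine ConnectedComponent.ind fun ⟨u, hu⟩ => ?_
    rcases hu with rfl | hu
    · exact ⟨G.induce S |>.connectedComponentMk x, ConnectedComponent.sound hwx'.symm.reachable⟩
    · exact ⟨G.induce S |>.connectedComponentMk ⟨u, hu⟩, rfl⟩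
  have hninj : ¬f.Injective := fun hinj => hxy <| ConnectedComponent.exact <|
    hinj (a₁ := (G.induce S).connectedComponentMk x) (a₂ := (G.induce S).connectedComponentMk y) <|
      ConnectedComponent.sound (hwx'.symm.reachable.trans hwy'.reachable)
  have := Fintype.ofFinite (G.induce S).ConnectedComponent
  have := Fintype.ofFinite (G.induce (insert w S)).ConnectedComponent
  simpa only [Nat.card_eq_fintype_card] using
    Fintype.card_lt_of_surjective_not_injective f hsurj hninj

theorem exists_connected_superset_of_isVertexCover [Finite V] (hG : G.Preconnected)
    (hS : G.IsVertexCover S) (hne : S.Nonempty) :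
    ∃ T, S ⊆ T ∧ (G.induce T).Connected ∧
      T.ncard + 1 ≤ S.ncard + Nat.card (G.induce S).ConnectedComponent := by
  induction h : Nat.card (G.induce S).ConnectedComponent using Nat.strong_induction_on
    generalizing S with
  | _ n ih =>
  have := hne.to_subtype
  by_cases hconn : (G.induce S).Preconnected
  · have : 0 < n := h ▸ Nat.card_pos
    exact ⟨S, subset_rfl, ⟨hconn⟩, by omega⟩
  obtain ⟨w, hw, x, y, hwx, hwy, hxy⟩ := exists_adj_adj_of_not_preconnected hG hS hconn
  have hlt := h ▸ card_connectedComponent_insert_lt hw hwx hwy hxy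
  obtain ⟨T, hST, hT, hTcard⟩ :=
    ih _ hlt (hS.subset (Set.subset_insert w S)) (Set.insert_nonempty w S) rfl
  have := Set.ncard_insert_of_notMem hw (Set.toFinite S)
  exact ⟨T, (Set.subset_insert w S).trans hST, hT, by omega⟩

theorem SimpleGraph.IsVertexCover.nonempty [Nontrivial V] (hG : G.Preconnected)
    (hS : G.IsVertexCover S) : S.Nonempty := by
  obtain ⟨u, -⟩ := exists_pair_ne V
  obtain ⟨v, huv⟩ := G.mem_support.mp (hG.support_eq_univ ▸ Set.mem_univ u)
  exact (hS huv).elim (⟨u, ·⟩) (⟨v, ·⟩)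

theorem stmt19 [Fintype V] (G : SimpleGraph V) (hG : G.Connected)
    (hcard : 2 ≤ Fintype.card V) :
    (∀ X S : Set V, (∀ u v : V, G.Adj u v → u ∈ X ∨ v ∈ X) → X ⊆ S → S.Nonempty →
      (∀ D : Set V, IsCompOf G Sᶜ D → D.ncard ≤ S.ncard) → IsSafeSet G S) ∧
    (∀ X : Set V, (∀ u v : V, G.Adj u v → u ∈ X ∨ v ∈ X) → X.ncard = vcNum G →
      1 ≤ X.ncard → IsSafeSet G X) ∧
    sNum G ≤ vcNum G ∧ csNum G ≤ 2 * vcNum G := by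
  have : Nontrivial V := Fintype.one_lt_card_iff_nontrivial.mp hcard
  obtain ⟨X₀, hX₀, hX₀card⟩ : ∃ X : Set V, G.IsVertexCover X ∧ X.ncard = vcNum G :=
    Nat.sInf_mem (s := {n | ∃ X : Set V, G.IsVertexCover X ∧ X.ncard = n})
      ⟨_, Set.univ, isVertexCover_univ, rfl⟩
  have hX₀ne := hX₀.nonempty hG.preconnected
  refine ⟨fun X S hX hXS hS _ => isSafeSet_of_isVertexCover (IsVertexCover.subset hXS hX) hS,
    fun X hX _ hX1 => isSafeSet_of_isVertexCover hX (Set.nonempty_of_ncard_ne_zero (by omega)),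
    Nat.sInf_le ⟨X₀, isSafeSet_of_isVertexCover hX₀ hX₀ne, hX₀card⟩, ?_⟩
  obtain ⟨T, hX₀T, hT, hTcard⟩ :=
    exists_connected_superset_of_isVertexCover hG.preconnected hX₀ hX₀ne
  have hcomp : Nat.card (G.induce X₀).ConnectedComponent ≤ X₀.ncard :=
    (Nat.card_le_card_of_surjective _ Quot.mk_surjective).trans_eq (Nat.card_coe_set_eq X₀)
  have hTsafe := isSafeSet_of_isVertexCover (hX₀.subset hX₀T) (hX₀ne.mono hX₀T)
  calc csNum G ≤ T.ncard := Nat.sInf_le ⟨T, ⟨hTsafe, hT⟩, rfl⟩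
    _ ≤ 2 * vcNum G := by omega
end
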